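/- arXiv:1611.02350 — 3 statements merged into one kernel-verified Lean document; each statement's English description precedes it below -/
import Mathlib

section
/- Let R be a real matrix of size m×r and D a real matrix with orthonormal columns (D^T D = I) such that D D^T R = R. Suppose D^T R has full row rank. Then the block matrix Λ = [[-I, -R^T D],[D^T R, 0]] is Hurwitz, i.e., every eigenvalue of Λ has strictly negative real part. -/
open Matrix

open scoped ComplexOrder

/-- A real square matrix is Hurwitz if all its complex eigenvalues have
strictly negative real part. -/
def IsHurwitz {N : Type*} [Fintype N] [DecidableEq N] (M : Matrix N N ℝ) : Prop :=
  ∀ z ∈ spectrum ℂ (M.map Complex.ofReal), z.re < 0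

set_option maxHeartbeats 1000000 in
/-- If `D` has orthonormal columns, `D Dᵀ R = R`, and `Dᵀ R` has full row rank,
then `Λ = [[-I, -Rᵀ D],[Dᵀ R, 0]]` is Hurwitz. -/
theorem lambda_hurwitz (m r k : ℕ)
    (R : Matrix (Fin m) (Fin r) ℝ) (D : Matrix (Fin m) (Fin k) ℝ)
    (hD : Dᵀ * D = 1) (hDR : D * Dᵀ * R = R)
    (hrank : (Dᵀ * R).rank = k) :
    IsHurwitz (Matrix.fromBlocks (-1 : Matrix (Fin r) (Fin r) ℝ)
      (-(Rᵀ * D)) (Dᵀ * R) (0 : Matrix (Fin k) (Fin k) ℝ)) := by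
  intro z hz
  set B : Matrix (Fin k) (Fin r) ℝ := Dᵀ * R with hBdef
  set C : Matrix (Fin k) (Fin r) ℂ := B.map Complex.ofReal with hCdef
  have hRD : Rᵀ * D = Bᵀ := by rw [hBdef, Matrix.transpose_mul, Matrix.transpose_transpose]
  have hmap : (Matrix.fromBlocks (-1 : Matrix (Fin r) (Fin r) ℝ)
      (-(Rᵀ * D)) B (0 : Matrix (Fin k) (Fin k) ℝ)).map Complex.ofReal
      = Matrix.fromBlocks (-1) (-Cᵀ) C 0 := by
    rw [Matrix.fromBlocks_map, hRD]
    ext i j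
    rcases i with i | i <;> rcases j with j | j <;>
      simp [Matrix.one_apply, apply_ite, Matrix.map_apply, hCdef]
  rw [hmap] at hz
  -- injectivity of Cᵀ as a map, from the rank hypothesis
  have hrankBB : (B * Bᵀ).rank = k := by
    rw [Matrix.rank_self_mul_transpose]; exact hrank
  have hdetBB : (B * Bᵀ).det ≠ 0 := by
    intro hdet0
    obtain ⟨w, hw0, hww⟩ := Matrix.exists_mulVec_eq_zero_iff.mpr hdet0
    have hsurj : Function.Surjective (B * Bᵀ).mulVecLin := by
      rw [← LinearMap.range_eq_top]
      apply Submodule.eq_top_of_finrank_eq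
      rw [← Matrix.rank, hrankBB, Module.finrank_fintype_fun_eq_card, Fintype.card_fin]
    have hinj : Function.Injective (B * Bᵀ).mulVecLin :=
      (LinearMap.injective_iff_surjective).mpr hsurj
    have h0 : (B * Bᵀ).mulVecLin w = (B * Bᵀ).mulVecLin 0 := by
      rw [Matrix.mulVecLin_apply, Matrix.mulVecLin_apply, Matrix.mulVec_zero, hww]
    exact hw0 (hinj h0)
  have hdetCC : ((B * Bᵀ).map Complex.ofReal).det ≠ 0 := by
    have h2 := RingHom.map_det Complex.ofRealHom (B * Bᵀ)
    rw [RingHom.mapMatrix_apply] at h2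
    rw [show ((B * Bᵀ).map Complex.ofReal) = (B * Bᵀ).map Complex.ofRealHom from rfl, ← h2]
    simpa using hdetBB
  have hCCeq : C * Cᵀ = (B * Bᵀ).map Complex.ofReal := by
    ext i j
    simp [Matrix.mul_apply, Matrix.map_apply, hCdef]
  have hCinj : ∀ w : Fin k → ℂ, Cᵀ.mulVec w = 0 → w = 0 := by
    intro w hw
    by_contra hw0
    apply hdetCC
    rw [← Matrix.exists_mulVec_eq_zero_iff]
    refine ⟨w, hw0, ?_⟩
    rw [← hCCeq, ← Matrix.mulVec_mulVec, hw, Matrix.mulVec_zero]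
  -- extract an eigenvector
  rw [spectrum.mem_iff] at hz
  have hdet : (algebraMap ℂ (Matrix (Fin r ⊕ Fin k) (Fin r ⊕ Fin k) ℂ) z
      - Matrix.fromBlocks (-1) (-Cᵀ) C 0).det = 0 := by
    by_contra h
    exact hz ((Matrix.isUnit_iff_isUnit_det _).mpr (Ne.isUnit h))
  obtain ⟨v, hv0, hveq⟩ := Matrix.exists_mulVec_eq_zero_iff.mpr hdet
  set x : Fin r → ℂ := v ∘ Sum.inl with hxdef
  set y : Fin k → ℂ := v ∘ Sum.inr with hydef
  have hv : v = Sum.elim x y := by funext i; cases i <;> rfl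
  have heig : (Matrix.fromBlocks (-1) (-Cᵀ) C 0).mulVec (Sum.elim x y)
      = z • Sum.elim x y := by
    rw [← hv]
    have h1 : (algebraMap ℂ (Matrix (Fin r ⊕ Fin k) (Fin r ⊕ Fin k) ℂ) z).mulVec v
        = z • v := by
      rw [Matrix.algebraMap_eq_diagonal]
      ext i; simp [Matrix.mulVec_diagonal]
    have h2 := hveq
    rw [Matrix.sub_mulVec, h1, sub_eq_zero] at h2
    exact h2.symm
  rw [Matrix.fromBlocks_mulVec] at heig
  have e1 : -x - Cᵀ.mulVec y = z • x := by
    funext i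
    have h := congrFun heig (Sum.inl i)
    simpa [Matrix.neg_mulVec, Matrix.one_mulVec, sub_eq_add_neg] using h
  have e2 : C.mulVec x = z • y := by
    funext i
    have h := congrFun heig (Sum.inr i)
    simpa [Matrix.zero_mulVec] using h
  -- dot products
  set t : ℂ := star x ⬝ᵥ x with htdef
  set u : ℂ := star y ⬝ᵥ y with hudef
  set s : ℂ := star x ⬝ᵥ Cᵀ.mulVec y with hsdef
  have ht : 0 ≤ t := dotProduct_star_self_nonneg x
  have hu : 0 ≤ u := dotProduct_star_self_nonneg y
  have hq1 : -t - s = z * t := by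
    have := congrArg (fun w => star x ⬝ᵥ w) e1
    simpa [dotProduct_sub, dotProduct_neg, dotProduct_smul,
      smul_eq_mul] using this
  have hCstar : ∀ i j, star (C i j) = C i j := by
    intro i j
    simp [hCdef, Matrix.map_apply]
  have hconj : star y ⬝ᵥ C.mulVec x = star s := by
    rw [hsdef]
    simp only [dotProduct, Matrix.mulVec, Matrix.transpose_apply, Pi.star_apply,
      star_sum, star_mul', Finset.mul_sum, Finset.sum_mul]
    rw [Finset.sum_comm]
    refine Finset.sum_congr rfl fun i _ => Finset.sum_congr rfl fun j _ => ?_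
    rw [star_star, hCstar]
    ring
  have hq2 : star s = z * u := by
    have := congrArg (fun w => star y ⬝ᵥ w) e2
    rw [← hconj]
    simpa [dotProduct_smul, smul_eq_mul] using this
  -- pass to real parts
  have htre : 0 ≤ t.re ∧ t.im = 0 := by
    rw [Complex.le_def] at ht; simp at ht; exact ⟨ht.1, ht.2.symm⟩
  have hure : 0 ≤ u.re ∧ u.im = 0 := by
    rw [Complex.le_def] at hu; simp at hu; exact ⟨hu.1, hu.2.symm⟩
  have hr1 : -t.re - s.re = z.re * t.re := by
    have := congrArg Complex.re hq1
    simpa [Complex.mul_re, htre.2] using this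
  have hr2 : s.re = z.re * u.re := by
    have := congrArg Complex.re hq2
    simpa [Complex.mul_re, hure.2] using this
  have hkey : z.re * (t.re + u.re) = -t.re := by nlinarith [hr1, hr2]
  have hxy : x ≠ 0 ∨ y ≠ 0 := by
    by_contra h
    push_neg at h
    apply hv0
    rw [hv, h.1, h.2]
    funext i; cases i <;> rfl
  have hpos : 0 < t.re + u.re := by
    rcases hxy with h | h
    · have h' : 0 < t := Matrix.dotProduct_star_self_pos_iff.mpr h
      rw [Complex.lt_def] at h'
      simp only [Complex.zero_re, Complex.zero_im] at h'
      linarith [hure.1, h'.2]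
    · have h' : 0 < u := Matrix.dotProduct_star_self_pos_iff.mpr h
      rw [Complex.lt_def] at h'
      simp only [Complex.zero_re, Complex.zero_im] at h'
      linarith [htre.1, h'.2]
  have hle : z.re ≤ 0 := by nlinarith [htre.1, hkey, hpos]
  rcases lt_or_eq_of_le hle with h | h
  · exact h
  · exfalso
    have ht0 : t.re = 0 := by nlinarith [hkey, hpos]
    have htz : t = 0 := Complex.ext ht0 htre.2
    have hx0 : x = 0 := dotProduct_star_self_eq_zero.mp htz
    have hy0 : y ≠ 0 := by
      rcases hxy with h' | h'
      · exact absurd hx0 h'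
      · exact h'
    have hCy : Cᵀ.mulVec y = 0 := by
      have h2 := e1
      rw [hx0] at h2
      simpa using h2.symm
    exact hy0 (hCinj y hCy)
end

section
/- Let M be a real square matrix of the form M = [[-I, -G^T],[G, 0]] where G has full row rank. If jω (ω ∈ ℝ) is an eigenvalue of M with eigenvector (v₁, v₂) ≠ 0, then v₂ ≠ 0 and G G^T v₂ = -(jω/(1+jω)) v₂; since G G^T is real symmetric with real eigenvalues, ω = 0, contradicting invertibility of G G^T. Hence M has no purely imaginary eigenvalue. -/
open Matrix

/-- If `G` has full row rank, then `M = [[-I, -Gᵀ],[G, 0]]` has no purely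
imaginary eigenvalue (no eigenvalue on the imaginary axis). -/
theorem no_imaginary_eigenvalue (k m : ℕ)
    (G : Matrix (Fin k) (Fin m) ℝ) (hrank : G.rank = k) :
    ∀ z ∈ spectrum ℂ
      ((Matrix.fromBlocks (-1 : Matrix (Fin m) (Fin m) ℝ) (-Gᵀ) G
        (0 : Matrix (Fin k) (Fin k) ℝ)).map Complex.ofReal),
      z.re ≠ 0 := by
  intro z hz hre
  set A : Matrix (Fin k) (Fin m) ℂ := G.map Complex.ofReal with hA
  have hmap : (Matrix.fromBlocks (-1 : Matrix (Fin m) (Fin m) ℝ) (-Gᵀ) G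
        (0 : Matrix (Fin k) (Fin k) ℝ)).map Complex.ofReal
      = Matrix.fromBlocks (-1) (-Aᵀ) A 0 := by
    rw [Matrix.fromBlocks_map]
    have e1 : ((-1 : Matrix (Fin m) (Fin m) ℝ)).map Complex.ofReal = -1 := by
      ext i j; by_cases h : i = j <;> simp [Matrix.map_apply, Matrix.one_apply, h]
    have e2 : ((-Gᵀ)).map Complex.ofReal = -Aᵀ := by
      ext i j; simp [Matrix.map_apply, hA]
    have e3 : ((0 : Matrix (Fin k) (Fin k) ℝ)).map Complex.ofReal = 0 := by
      ext i j; simp [Matrix.map_apply]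
    rw [e1, e2, e3]
  rw [hmap] at hz
  set M : Matrix (Fin m ⊕ Fin k) (Fin m ⊕ Fin k) ℂ := Matrix.fromBlocks (-1) (-Aᵀ) A 0 with hM
  rw [spectrum.mem_iff] at hz
  rw [Matrix.isUnit_iff_isUnit_det, isUnit_iff_ne_zero, not_ne_iff] at hz
  obtain ⟨v, hv0, hveq⟩ := (Matrix.exists_mulVec_eq_zero_iff).2 hz
  have heig : M *ᵥ v = z • v := by
    have h1 : (algebraMap ℂ (Matrix (Fin m ⊕ Fin k) (Fin m ⊕ Fin k) ℂ) z - M) *ᵥ v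
        = (algebraMap ℂ _ z) *ᵥ v - M *ᵥ v := Matrix.sub_mulVec _ _ _
    rw [hveq] at h1
    have h2 : (algebraMap ℂ (Matrix (Fin m ⊕ Fin k) (Fin m ⊕ Fin k) ℂ) z) *ᵥ v = z • v := by
      ext i
      simp [Matrix.algebraMap_eq_diagonal, Matrix.mulVec_diagonal, Pi.smul_apply, smul_eq_mul]
    rw [h2] at h1
    exact (sub_eq_zero.mp h1.symm).symm
  -- split the eigenvector
  set v₁ : Fin m → ℂ := v ∘ Sum.inl with hv₁
  set v₂ : Fin k → ℂ := v ∘ Sum.inr with hv₂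
  have hvelim : v = Sum.elim v₁ v₂ := (Sum.elim_comp_inl_inr v).symm
  rw [hvelim, hM, Matrix.fromBlocks_mulVec] at heig
  have E1 : -v₁ - Aᵀ *ᵥ v₂ = z • v₁ := by
    funext i
    have h := congrFun heig (Sum.inl i)
    simpa [Matrix.neg_mulVec, Matrix.one_mulVec, sub_eq_add_neg] using h
  have E2 : A *ᵥ v₁ = z • v₂ := by
    funext i
    have h := congrFun heig (Sum.inr i)
    simpa using h
  -- norms
  set r₁ : ℝ := ∑ i, Complex.normSq (v₁ i) with hr₁
  set r₂ : ℝ := ∑ i, Complex.normSq (v₂ i) with hr₂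
  have hn1 : star v₁ ⬝ᵥ v₁ = (r₁ : ℂ) := by
    rw [hr₁]; push_cast
    simp [dotProduct, Complex.normSq_eq_conj_mul_self]
  have hn2 : star v₂ ⬝ᵥ v₂ = (r₂ : ℂ) := by
    rw [hr₂]; push_cast
    simp [dotProduct, Complex.normSq_eq_conj_mul_self]
  set t : ℂ := star v₁ ⬝ᵥ (Aᵀ *ᵥ v₂) with ht
  -- the cross terms are conjugate
  have hconj : (starRingEnd ℂ) t = star v₂ ⬝ᵥ (A *ᵥ v₁) := by
    rw [ht]
    simp only [dotProduct, mulVec, map_sum, _root_.map_mul, Matrix.transpose_apply, hA,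
      Matrix.map_apply, Complex.conj_ofReal, Pi.star_apply, RCLike.star_def, Complex.conj_conj,
      Finset.mul_sum]
    rw [Finset.sum_comm]
    exact Finset.sum_congr rfl fun j _ => Finset.sum_congr rfl fun i _ => by ring
  -- dot the eigen-equations
  have eq1 : z * (r₁ : ℂ) = -(r₁ : ℂ) - t := by
    have := congrArg (fun w => star v₁ ⬝ᵥ w) E1
    simp only [dotProduct_sub, dotProduct_neg, dotProduct_smul,
      smul_eq_mul] at this
    rw [hn1, ← ht] at this
    exact this.symm
  have eq2 : z * (r₂ : ℂ) = (starRingEnd ℂ) t := by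
    have := congrArg (fun w => star v₂ ⬝ᵥ w) E2
    simp only [dotProduct_smul, smul_eq_mul] at this
    rw [hn2, ← hconj] at this
    exact this.symm
  -- take conjugate of eq2 and add
  have eq2' : (starRingEnd ℂ) z * (r₂ : ℂ) = t := by
    have := congrArg (starRingEnd ℂ) eq2
    simpa [Complex.conj_ofReal] using this
  have key : z * (r₁ : ℂ) + (starRingEnd ℂ) z * (r₂ : ℂ) = -(r₁ : ℂ) := by
    rw [eq1, eq2']; ring
  -- take real parts
  have hre' : (z * (r₁ : ℂ) + (starRingEnd ℂ) z * (r₂ : ℂ)).re = 0 := by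
    simp [Complex.add_re, Complex.mul_re, hre]
  rw [key] at hre'
  have hr₁0 : r₁ = 0 := by
    have : (-(r₁ : ℂ)).re = -r₁ := by simp
    rw [this] at hre'; linarith
  -- hence v₁ = 0
  have hv₁0 : v₁ = 0 := by
    funext i
    have hnonneg : ∀ j ∈ Finset.univ, (0 : ℝ) ≤ Complex.normSq (v₁ j) :=
      fun j _ => Complex.normSq_nonneg _
    have hz0 := (Finset.sum_eq_zero_iff_of_nonneg hnonneg).1 hr₁0 i (Finset.mem_univ i)
    exact Complex.normSq_eq_zero.mp hz0
  -- from E1, Aᵀ v₂ = 0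
  have hAtv2 : Aᵀ *ᵥ v₂ = 0 := by
    have := E1
    rw [hv₁0] at this
    simpa using this.symm
  -- full rank gives v₂ = 0
  have hunitC : IsUnit ((G * Gᵀ).map Complex.ofReal) := by
    have hr : (G * Gᵀ).rank = Fintype.card (Fin k) := by
      rw [Matrix.rank_self_mul_transpose, hrank, Fintype.card_fin]
    have hsurj : Function.Surjective ((G * Gᵀ).mulVecLin) := by
      rw [← LinearMap.range_eq_top]
      apply Submodule.eq_top_of_finrank_eq
      rw [← Matrix.rank, hr, Module.finrank_fintype_fun_eq_card, Fintype.card_fin]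
    have hinj : Function.Injective ((G * Gᵀ).mulVecLin) :=
      (LinearMap.injective_iff_surjective).2 hsurj
    have hunit : IsUnit (G * Gᵀ) := by
      rw [← Matrix.mulVec_injective_iff_isUnit]; exact hinj
    have hdet : ((G * Gᵀ).map Complex.ofReal).det = (((G * Gᵀ).det : ℝ) : ℂ) :=
      (RingHom.map_det Complex.ofRealHom (G * Gᵀ)).symm
    rw [Matrix.isUnit_iff_isUnit_det, hdet, isUnit_iff_ne_zero]
    rw [Matrix.isUnit_iff_isUnit_det, isUnit_iff_ne_zero] at hunit
    exact_mod_cast hunit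
  have hmapmul : (G * Gᵀ).map Complex.ofReal = A * Aᵀ := by
    ext i j
    simp only [Matrix.map_apply, Matrix.mul_apply, hA, Matrix.transpose_apply]
    push_cast
    rfl
  rw [hmapmul] at hunitC
  have hinjC : Function.Injective ((A * Aᵀ).mulVec) :=
    Matrix.mulVec_injective_iff_isUnit.2 hunitC
  have hv₂0 : v₂ = 0 := by
    apply hinjC
    rw [← Matrix.mulVec_mulVec, hAtv2, Matrix.mulVec_zero, Matrix.mulVec_zero]
  -- contradiction
  apply hv0
  funext i
  rw [hvelim]
  cases i with
  | inl i => simp [hv₁0]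
  | inr i => simp [hv₂0]
end

section
/- (Kleinman's lemma) Let N ≥ 1 be an integer, F ∈ ℝ^{n×n}, G ∈ ℝ^{n×p}, with rank [G FG ⋯ F^{N-1}G] = n. Then the matrix H = F - G G^T F^{(N-1)T} (Σ_{ℓ=0}^{N-1} F^ℓ G G^T F^{ℓT})^{-1} F^N is Schur, i.e., all eigenvalues of H lie in the open unit disc. -/
/-!
Suppose `H v = z v` with `v ≠ 0` and `‖z‖ ≥ 1`, and let `W` be the Gramian. The control sequence
`g ℓ = Gᴴ (Fᴴ)^ℓ W⁻¹ F^N v` satisfies `∑_{ℓ<N} F^ℓ G g ℓ = F^N v`, and since it lies in the range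
of the adjoint of `w ↦ ∑_{ℓ<N} F^ℓ G w ℓ` it is orthogonal to the kernel of that map. The
eigenvalue equation reads `F v - G g (N-1) = z v`, so the delayed sequence `(0, g 0, …, g (N-2))`
is mapped to `z F^N v` and differs from `z g` by an element of the kernel. Pythagoras gives
`‖delay g‖² = ‖delay g - z g‖² + ‖z‖² ‖g‖²`, while `‖delay g‖² ≤ ‖g‖²`; hence `delay g = z g`,
which forces `g = 0`. Then `F v = z v` and `z^N v = F^N v = 0`, a contradiction.
-/

open Matrix Finset

/-- A real square matrix is Schur if all its complex eigenvalues lie in the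
open unit disc. -/
def IsSchur {N : Type*} [Fintype N] [DecidableEq N] (M : Matrix N N ℝ) : Prop :=
  ∀ z ∈ spectrum ℂ (M.map Complex.ofReal), ‖z‖ < 1

open scoped InnerProductSpace

theorem sum_norm_add_sq_of_sum_inner_eq_zero {𝕜 E ι : Type*} [RCLike 𝕜] [NormedAddCommGroup E]
    [InnerProductSpace 𝕜 E] (s : Finset ι) (x y : ι → E) (h : ∑ i ∈ s, ⟪x i, y i⟫_𝕜 = 0) :
    ∑ i ∈ s, ‖x i + y i‖ ^ 2 = ∑ i ∈ s, ‖x i‖ ^ 2 + ∑ i ∈ s, ‖y i‖ ^ 2 := by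
  simp_rw [norm_add_sq (𝕜 := 𝕜)]
  rw [sum_add_distrib, sum_add_distrib, ← mul_sum, ← map_sum, h, map_zero, mul_zero, add_zero]

def delay {α : Type*} [Zero α] (w : ℕ → α) : ℕ → α
  | 0 => 0
  | ℓ + 1 => w ℓ

theorem delay_comp {α β : Type*} [Zero α] [Zero β] (f : α → β) (hf : f 0 = 0) (w : ℕ → α) :
    delay (f ∘ w) = f ∘ delay w := by
  funext ℓ
  cases ℓ <;> simp [delay, hf]

theorem sum_range_succ_norm_sq_delay {E : Type*} [SeminormedAddCommGroup E] (w : ℕ → E) (M : ℕ) :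
    ∑ ℓ ∈ range (M + 1), ‖delay w ℓ‖ ^ 2 = ∑ ℓ ∈ range M, ‖w ℓ‖ ^ 2 := by
  simp [sum_range_succ', delay]

theorem delay_eq_smul_of_sum_inner_eq_zero {𝕜 E : Type*} [RCLike 𝕜] [NormedAddCommGroup E]
    [InnerProductSpace 𝕜 E] {g : ℕ → E} {z : 𝕜} {M : ℕ} (hz : 1 ≤ ‖z‖)
    (h : ∑ ℓ ∈ range (M + 1), ⟪z • g ℓ, delay g ℓ - z • g ℓ⟫_𝕜 = 0) :
    ∀ ℓ ≤ M, delay g ℓ = z • g ℓ := by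
  have hpyth := sum_norm_add_sq_of_sum_inner_eq_zero _ _ _ h
  simp only [add_sub_cancel, norm_smul, mul_pow, ← mul_sum] at hpyth
  rw [sum_range_succ_norm_sq_delay, sum_range_succ (fun ℓ => ‖g ℓ‖ ^ 2)] at hpyth
  have hd0 : ∑ ℓ ∈ range (M + 1), ‖delay g ℓ - z • g ℓ‖ ^ 2 = 0 := by
    have hg_nonneg : 0 ≤ ∑ ℓ ∈ range M, ‖g ℓ‖ ^ 2 := by positivity
    have hd_nonneg : 0 ≤ ∑ ℓ ∈ range (M + 1), ‖delay g ℓ - z • g ℓ‖ ^ 2 := by positivity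
    nlinarith [pow_le_pow_left₀ zero_le_one hz 2, sq_nonneg ‖g M‖]
  intro ℓ hℓ
  have hdℓ := (sum_eq_zero_iff_of_nonneg (fun _ _ => by positivity)).mp hd0 ℓ
    (mem_range.mpr (Nat.lt_succ_of_le hℓ))
  rw [pow_eq_zero_iff two_ne_zero, norm_eq_zero] at hdℓ
  exact sub_eq_zero.mp hdℓ

theorem eq_zero_of_delay_eq_smul {R α : Type*} [Semiring R] [IsCancelMulZero R] [AddCommMonoid α]
    [Module R α] [Module.IsTorsionFree R α] {z : R} (hz : z ≠ 0) {w : ℕ → α} {M : ℕ}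
    (h : ∀ ℓ ≤ M, delay w ℓ = z • w ℓ) : ∀ ℓ ≤ M, w ℓ = 0 := by
  intro ℓ hℓ
  induction ℓ with
  | zero =>
    have h0 := h 0 hℓ
    rwa [delay, eq_comm, smul_eq_zero_iff_right hz] at h0
  | succ k ih =>
    have hk := h (k + 1) hℓ
    rwa [delay, ih (by omega), eq_comm, smul_eq_zero_iff_right hz] at hk

namespace Matrix

section Control

variable {R m p : Type*} [CommRing R] [Fintype m] [DecidableEq m] [Fintype p]
  (A : Matrix m m R) (B : Matrix m p R)

/-- `w ℓ` is the input applied `ℓ` steps before time `N`, so this is the state reached from `0`. -/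
def controllabilityMap (N : ℕ) (w : ℕ → p → R) : m → R :=
  ∑ ℓ ∈ range N, (A ^ ℓ * B) *ᵥ w ℓ

theorem controllabilityMap_sub (N : ℕ) (w w' : ℕ → p → R) :
    controllabilityMap A B N (w - w') =
      controllabilityMap A B N w - controllabilityMap A B N w' := by
  simp [controllabilityMap, mulVec_sub, sum_sub_distrib]

theorem controllabilityMap_smul (N : ℕ) (c : R) (w : ℕ → p → R) :
    controllabilityMap A B N (c • w) = c • controllabilityMap A B N w := by
  simp [controllabilityMap, mulVec_smul, smul_sum]

theorem controllabilityMap_succ (N : ℕ) (w : ℕ → p → R) :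
    controllabilityMap A B (N + 1) w = controllabilityMap A B N w + (A ^ N * B) *ᵥ w N :=
  sum_range_succ _ _

theorem controllabilityMap_delay (N : ℕ) (w : ℕ → p → R) :
    controllabilityMap A B (N + 1) (delay w) = A *ᵥ controllabilityMap A B N w := by
  simp only [controllabilityMap, sum_range_succ', delay, mulVec_zero, add_zero, mulVec_sum,
    mulVec_mulVec, pow_succ', Matrix.mul_assoc]

theorem pow_mulVec_eq_pow_smul {v : m → R} {z : R} (hv : A *ᵥ v = z • v) (k : ℕ) :
    A ^ k *ᵥ v = z ^ k • v := by
  induction k with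
  | zero => rw [pow_zero, pow_zero, one_mulVec, one_smul]
  | succ k ih => rw [pow_succ, ← mulVec_mulVec, hv, mulVec_smul, ih, smul_smul, pow_succ']

variable [StarRing R]

def gramian (N : ℕ) : Matrix m m R :=
  ∑ ℓ ∈ range N, A ^ ℓ * B * Bᴴ * Aᴴ ^ ℓ

def controllabilityMapAdjoint (x : m → R) : ℕ → p → R :=
  fun ℓ => (Bᴴ * Aᴴ ^ ℓ) *ᵥ x

theorem controllabilityMap_controllabilityMapAdjoint (N : ℕ) (x : m → R) :
    controllabilityMap A B N (controllabilityMapAdjoint A B x) = gramian A B N *ᵥ x := by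
  simp only [controllabilityMap, controllabilityMapAdjoint, gramian, sum_mulVec, mulVec_mulVec,
    Matrix.mul_assoc]

theorem sum_dotProduct_star_controllabilityMapAdjoint (N : ℕ) (x : m → R) (d : ℕ → p → R) :
    ∑ ℓ ∈ range N, d ℓ ⬝ᵥ star (controllabilityMapAdjoint A B x ℓ) =
      controllabilityMap A B N d ⬝ᵥ star x := by
  simp only [controllabilityMapAdjoint, controllabilityMap, sum_dotProduct, star_mulVec,
    conjTranspose_mul, conjTranspose_pow, conjTranspose_conjTranspose, dotProduct_comm (d _),
    ← dotProduct_mulVec]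
  exact sum_congr rfl fun ℓ _ => dotProduct_comm _ _

theorem gramian_eq_sum_transpose [TrivialStar R] (N : ℕ) :
    gramian A B N = ∑ ℓ ∈ range N, A ^ ℓ * B * Bᵀ * Aᵀ ^ ℓ := by
  simp only [gramian, conjTranspose_eq_transpose_of_trivial]

def controllabilityMatrix (N : ℕ) : Matrix m (Fin N × p) R :=
  of fun i lj => (A ^ (lj.1 : ℕ) * B) i lj.2

theorem controllabilityMatrix_mul_conjTranspose (N : ℕ) :
    controllabilityMatrix A B N * (controllabilityMatrix A B N)ᴴ = gramian A B N := by
  ext i k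
  rw [mul_apply, Fintype.sum_prod_type, gramian, sum_apply, ← Fin.sum_univ_eq_sum_range]
  refine sum_congr rfl fun ℓ _ => ?_
  rw [Matrix.mul_assoc, ← conjTranspose_pow, ← conjTranspose_mul, mul_apply]
  rfl

theorem map_gramian {S : Type*} [CommRing S] [StarRing S] (f : R →+* S)
    (hf : Function.Semiconj f star star) (N : ℕ) :
    (gramian A B N).map f = gramian (A.map f) (B.map f) N := by
  rw [gramian, gramian, ← RingHom.mapMatrix_apply, map_sum]
  refine sum_congr rfl fun ℓ _ => ?_
  rw [RingHom.mapMatrix_apply]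
  simp only [Matrix.map_mul, Matrix.map_pow, conjTranspose_map f hf]

end Control

theorem isUnit_of_rank_eq_card {K n : Type*} [Field K] [Fintype n] [DecidableEq n]
    {A : Matrix n n K} (h : A.rank = Fintype.card n) : IsUnit A := by
  have hrange : LinearMap.range A.mulVecLin = ⊤ :=
    Submodule.eq_top_of_finrank_eq (h.trans (Module.finrank_fintype_fun_eq_card K).symm)
  exact mulVec_surjective_iff_isUnit.mp (LinearMap.range_eq_top.mp hrange)

theorem isUnit_gramian_of_rank_controllabilityMatrix {K m p : Type*} [Field K] [PartialOrder K]
    [StarRing K] [StarOrderedRing K] [Fintype m] [DecidableEq m] [Fintype p]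
    {A : Matrix m m K} {B : Matrix m p K} {N : ℕ}
    (h : (controllabilityMatrix A B N).rank = Fintype.card m) : IsUnit (gramian A B N) := by
  rw [← controllabilityMatrix_mul_conjTranspose]
  exact isUnit_of_rank_eq_card ((rank_self_mul_conjTranspose _).trans h)

theorem exists_mulVec_eq_smul_of_mem_spectrum {K n : Type*} [Field K] [Fintype n] [DecidableEq n]
    {A : Matrix n n K} {z : K} (hz : z ∈ spectrum K A) : ∃ v ≠ 0, A *ᵥ v = z • v := by
  rw [← spectrum_toLin', ← Module.End.hasEigenvalue_iff_mem_spectrum] at hz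
  obtain ⟨v, hv⟩ := hz.exists_hasEigenvector
  exact ⟨v, hv.2, by simpa using hv.apply_eq_smul⟩

section RCLike

variable {𝕜 m p : Type*} [RCLike 𝕜] [Fintype m] [DecidableEq m] [Fintype p]
  {A : Matrix m m 𝕜} {B : Matrix m p 𝕜}

theorem controllabilityMapAdjoint_eq_zero_of_map_delay_eq_smul {M : ℕ} {x : m → 𝕜} {z : 𝕜}
    (hz : 1 ≤ ‖z‖)
    (h : controllabilityMap A B (M + 1) (delay (controllabilityMapAdjoint A B x)) =
      z • controllabilityMap A B (M + 1) (controllabilityMapAdjoint A B x)) :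
    ∀ ℓ ≤ M, controllabilityMapAdjoint A B x ℓ = 0 := by
  set g := controllabilityMapAdjoint A B x with hg
  set d := delay g - z • g with hd
  have hker : controllabilityMap A B (M + 1) d = 0 := by
    rw [hd, controllabilityMap_sub, controllabilityMap_smul, h, sub_self]
  have horth : ∑ ℓ ∈ range (M + 1), ⟪WithLp.toLp 2 (z • g ℓ), WithLp.toLp 2 (d ℓ)⟫_𝕜 = 0 := by
    simp only [EuclideanSpace.inner_toLp_toLp, star_smul, dotProduct_smul, ← smul_sum, hg,
      sum_dotProduct_star_controllabilityMapAdjoint, hker, zero_dotProduct, smul_zero]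
  have hdelay := delay_eq_smul_of_sum_inner_eq_zero (g := WithLp.toLp 2 ∘ g) hz (by
    simpa only [hd, delay_comp _ (WithLp.toLp_zero 2), Function.comp_apply, Pi.sub_apply,
      Pi.smul_apply, WithLp.toLp_sub, WithLp.toLp_smul] using horth)
  refine eq_zero_of_delay_eq_smul (norm_pos_iff.mp (zero_lt_one.trans_le hz)) fun ℓ hℓ => ?_
  simpa only [delay_comp _ (WithLp.toLp_zero 2), Function.comp_apply, ← WithLp.toLp_smul,
    (WithLp.toLp_injective 2).eq_iff] using hdelay ℓ hℓ

theorem norm_lt_one_of_mulVec_eq_smul_of_gramian_mul_eq_one {M : ℕ} {V : Matrix m m 𝕜}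
    (hV : gramian A B (M + 1) * V = 1) {v : m → 𝕜} (hv0 : v ≠ 0) {z : 𝕜}
    (hv : (A - B * Bᴴ * Aᴴ ^ M * V * A ^ (M + 1)) *ᵥ v = z • v) : ‖z‖ < 1 := by
  by_contra! hz
  have hz0 : z ≠ 0 := norm_pos_iff.mp (zero_lt_one.trans_le hz)
  set g := controllabilityMapAdjoint A B (V *ᵥ A ^ (M + 1) *ᵥ v) with hg
  have hreach : controllabilityMap A B (M + 1) g = A ^ (M + 1) *ᵥ v := by
    rw [controllabilityMap_controllabilityMapAdjoint, mulVec_mulVec, hV, one_mulVec]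
  have hstep : A *ᵥ v - B *ᵥ g M = z • v := by
    rw [← hv, hg, controllabilityMapAdjoint]
    simp only [sub_mulVec, mulVec_mulVec, Matrix.mul_assoc]
  have hdelay :
      controllabilityMap A B (M + 1) (delay g) = z • controllabilityMap A B (M + 1) g := by
    have hM : controllabilityMap A B M g = A ^ (M + 1) *ᵥ v - (A ^ M * B) *ᵥ g M := by
      rw [← hreach, controllabilityMap_succ, add_sub_cancel_right]
    rw [controllabilityMap_delay, hM, hreach, ← mulVec_smul, ← hstep]
    simp only [mulVec_sub, mulVec_mulVec, ← Matrix.mul_assoc, ← pow_succ, ← pow_succ']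
  have hg0 : ∀ ℓ ≤ M, g ℓ = 0 :=
    controllabilityMapAdjoint_eq_zero_of_map_delay_eq_smul hz hdelay
  have hAv : A *ᵥ v = z • v := by rwa [hg0 M le_rfl, mulVec_zero, sub_zero] at hstep
  have hpow : A ^ (M + 1) *ᵥ v = 0 := by
    rw [← hreach]
    exact sum_eq_zero fun ℓ hℓ => by rw [hg0 ℓ (Nat.lt_succ_iff.mp (mem_range.mp hℓ)), mulVec_zero]
  rw [pow_mulVec_eq_pow_smul A hAv] at hpow
  exact hv0 ((smul_eq_zero_iff_right (pow_ne_zero _ hz0)).mp hpow)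

end RCLike

end Matrix

/-- Kleinman's lemma: if the controllability matrix `[G FG ⋯ F^{N-1}G]` has
full row rank `n`, then
`H = F - G Gᵀ (Fᵀ)^{N-1} (Σ_{ℓ<N} F^ℓ G Gᵀ (Fᵀ)^ℓ)⁻¹ F^N` is Schur. -/
theorem kleinman (n p N : ℕ) (hN : 1 ≤ N)
    (F : Matrix (Fin n) (Fin n) ℝ) (G : Matrix (Fin n) (Fin p) ℝ)
    (hrank :
      (Matrix.of fun (i : Fin n) (lj : Fin N × Fin p) =>
        (F ^ (lj.1 : ℕ) * G) i lj.2).rank = n) :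
    IsSchur (F - G * Gᵀ * (Fᵀ) ^ (N - 1) *
      (∑ ℓ ∈ Finset.range N, F ^ ℓ * G * Gᵀ * (Fᵀ) ^ ℓ)⁻¹ * F ^ N) := by
  obtain ⟨M, rfl⟩ : ∃ M, N = M + 1 := ⟨N - 1, by omega⟩
  have hW : IsUnit (gramian F G (M + 1)) :=
    isUnit_gramian_of_rank_controllabilityMatrix (hrank.trans (Fintype.card_fin n).symm)
  have hstar : Function.Semiconj Complex.ofRealHom star star :=
    fun x => (Complex.conj_ofReal x).symm
  rw [← gramian_eq_sum_transpose, Nat.add_sub_cancel, ← conjTranspose_eq_transpose_of_trivial G,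
    ← conjTranspose_eq_transpose_of_trivial F]
  intro z hz
  obtain ⟨v, hv0, hv⟩ := exists_mulVec_eq_smul_of_mem_spectrum hz
  rw [show Complex.ofReal = ⇑Complex.ofRealHom from rfl, Matrix.map_sub _ (map_sub _)] at hv
  have hV : gramian (F.map Complex.ofRealHom) (G.map Complex.ofRealHom) (M + 1) *
      (gramian F G (M + 1))⁻¹.map Complex.ofRealHom = 1 := by
    rw [← map_gramian F G _ hstar, ← Matrix.map_mul,
      mul_nonsing_inv _ ((isUnit_iff_isUnit_det _).mp hW),
      Matrix.map_one _ (map_zero _) (map_one _)]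
  exact norm_lt_one_of_mulVec_eq_smul_of_gramian_mul_eq_one hV hv0
    (by simpa only [Matrix.map_mul, Matrix.map_pow, ← conjTranspose_map _ hstar] using hv)
end
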